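/- Let σ ∈ (0,1), c > 0, and define d(c) as the infimum of S_c(u) over all u ∈ H¹(ℝ;ℂ) \ {0} with K_c(u) = 0, where S_c(u) = L_c(u) - N(u)/(σ+1), K_c(u) = L_c(u) - N(u), L_c(u) = ‖∂_x u‖² + c·Im∫ u conj(∂_x u) + (c²/4)‖u‖², N(u) = Im∫|u|^{2σ} u conj(∂_x u). If f ∈ H¹(ℝ;ℂ) \ {0} satisfies ‖∂_x f‖_{L²}² ≤ ((σ+1)/σ)·d(c), then K_c(e^{i(c/2)x} f) ≥ 0. -/

import Mathlib

open Real MeasureTheory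

def H1 (v : ℝ → ℂ) : Prop :=
  Differentiable ℝ v ∧ MemLp v 2 volume ∧ MemLp (deriv v) 2 volume

noncomputable def Lfun (c : ℝ) (v : ℝ → ℂ) : ℝ :=
  (∫ x : ℝ, ‖deriv v x‖ ^ 2) + c * (∫ x : ℝ, (v x * (starRingEnd ℂ) (deriv v x)).im)
    + (c ^ 2 / 4) * ∫ x : ℝ, ‖v x‖ ^ 2

noncomputable def Nfun (σ : ℝ) (v : ℝ → ℂ) : ℝ :=
  ∫ x : ℝ, ‖v x‖ ^ (2 * σ) * (v x * (starRingEnd ℂ) (deriv v x)).im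

noncomputable def Sfun (σ c : ℝ) (v : ℝ → ℂ) : ℝ :=
  Lfun c v - Nfun σ v / (σ + 1)

noncomputable def Kfun (σ c : ℝ) (v : ℝ → ℂ) : ℝ :=
  Lfun c v - Nfun σ v

/-- the minimization value `d(c)` -/
noncomputable def dmin (σ c : ℝ) : ℝ :=
  sInf {r : ℝ | ∃ u : ℝ → ℂ, H1 u ∧ u ≠ 0 ∧ Kfun σ c u = 0 ∧ Sfun σ c u = r}

noncomputable def gaugeT (c : ℝ) (f : ℝ → ℂ) : ℝ → ℂ :=
  fun x => Complex.exp (Complex.I * ((c / 2) * x : ℝ)) * f x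

/-!
The gauge `e^{i(c/2)x}` turns `L_c` into the kinetic energy `‖∂ₓf‖²` and `N` into
`N(f) - (c/2)∫|f|^{2σ+2}`. If `K_c(e^{i(c/2)x} f) < 0`, the dilation `f_γ(x) = γ^{1/σ} f(γx)`
multiplies `‖∂ₓf‖²` and `∫|f|^{2σ+2}` by `γ^{2/σ+1}` but `N(f)` by `γ^{2/σ+2}`, so for
`γ = (‖∂ₓf‖² + (c/2)∫|f|^{2σ+2}) / N(f) ∈ (0,1)` the gauged `f_γ` satisfies `K_c = 0`. There
`S_c = σ/(σ+1) L_c`, whence `d(c) ≤ σ/(σ+1) γ^{2/σ+1} ‖∂ₓf‖² < σ/(σ+1) ‖∂ₓf‖²`.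
-/

open ComplexConjugate

section Bounded

variable {E : Type*} [NormedAddCommGroup E] [InnerProductSpace ℝ E]

lemma sub_le_integral_abs_of_hasDerivAt {φ φ' : ℝ → ℝ} (hφ : ∀ t, HasDerivAt φ (φ' t) t)
    (hφ' : Integrable φ') (x y : ℝ) : φ x - φ y ≤ ∫ t, |φ' t| := by
  have hftc : ∫ t in x..y, φ' t = φ y - φ x :=
    intervalIntegral.integral_eq_sub_of_hasDerivAt (fun t _ => hφ t) hφ'.intervalIntegrable
  have hle : |∫ t in x..y, φ' t| ≤ ∫ t, |φ' t| := by
    simpa only [Real.norm_eq_abs] using intervalIntegral.norm_integral_le_integral_norm_uIoc.trans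
      (setIntegral_le_integral hφ'.norm (ae_of_all _ fun t => norm_nonneg (φ' t)))
  linarith [neg_abs_le (∫ t in x..y, φ' t)]

-- `‖f x‖² - ‖f 0‖² = ∫₀ˣ 2⟪f, f'⟫`, and `⟪f, f'⟫` is integrable as a product of `L²` functions.
lemma exists_norm_le_of_memLp_two {f : ℝ → E} (hd : Differentiable ℝ f)
    (hf : MemLp f 2 volume) (hf' : MemLp (deriv f) 2 volume) : ∃ C, ∀ x, ‖f x‖ ≤ C := by
  set φ' : ℝ → ℝ := fun t => 2 * inner ℝ (f t) (deriv f t)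
  have hφ : ∀ t, HasDerivAt (fun t => ‖f t‖ ^ 2) (φ' t) t := fun t => (hd t).hasDerivAt.norm_sq
  have hφ' : Integrable φ' := by
    refine ((hf.norm.integrable_mul hf'.norm).const_mul 2).mono'
      ((hd.continuous.aestronglyMeasurable.inner hf'.1).const_mul 2)
      (ae_of_all _ fun t => ?_)
    simpa [φ', abs_mul] using abs_real_inner_le_norm (f t) (deriv f t)
  refine ⟨√(‖f 0‖ ^ 2 + ∫ t, |φ' t|), fun x => Real.le_sqrt_of_sq_le ?_⟩
  linarith [sub_le_integral_abs_of_hasDerivAt hφ hφ' x 0]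

end Bounded

namespace H1

variable {f : ℝ → ℂ}

lemma exists_norm_le (hf : H1 f) : ∃ C, ∀ x, ‖f x‖ ≤ C :=
  exists_norm_le_of_memLp_two hf.1 hf.2.1 hf.2.2

lemma integrable_norm_sq (hf : H1 f) : Integrable (fun x => ‖f x‖ ^ 2) :=
  (memLp_two_iff_integrable_sq_norm hf.2.1.1).1 hf.2.1

lemma integrable_norm_deriv_sq (hf : H1 f) : Integrable (fun x => ‖deriv f x‖ ^ 2) :=
  (memLp_two_iff_integrable_sq_norm hf.2.2.1).1 hf.2.2

lemma integrable_im_mul_conj_deriv (hf : H1 f) :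
    Integrable (fun x => (f x * conj (deriv f x)).im) := by
  refine (hf.2.1.norm.integrable_mul hf.2.2.norm).mono'
    (Complex.continuous_im.comp_aestronglyMeasurable
      (hf.1.continuous.aestronglyMeasurable.mul hf.2.2.1.star)) (ae_of_all _ fun x => ?_)
  calc ‖(f x * conj (deriv f x)).im‖ ≤ ‖f x * conj (deriv f x)‖ := Complex.abs_im_le_norm _
    _ = ‖f x‖ * ‖deriv f x‖ := by rw [norm_mul, Complex.norm_conj]

lemma integrable_norm_rpow_mul (hf : H1 f) {p : ℝ} (hp : 0 ≤ p) {g : ℝ → ℝ}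
    (hg : Integrable g) : Integrable (fun x => ‖f x‖ ^ p * g x) := by
  obtain ⟨C, hC⟩ := hf.exists_norm_le
  refine hg.bdd_mul (c := C ^ p)
    (hf.1.continuous.norm.rpow_const fun _ => Or.inr hp).aestronglyMeasurable
    (ae_of_all _ fun x => ?_)
  rw [Real.norm_of_nonneg (by positivity)]
  exact Real.rpow_le_rpow (norm_nonneg _) (hC x) hp

lemma integrable_norm_rpow (hf : H1 f) {p : ℝ} (hp : 2 ≤ p) :
    Integrable (fun x => ‖f x‖ ^ p) := by
  refine (hf.integrable_norm_rpow_mul (sub_nonneg.2 hp) hf.integrable_norm_sq).congr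
    (ae_of_all _ fun x => ?_)
  dsimp only
  rw [← Real.rpow_two, ← Real.rpow_add' (norm_nonneg _) (by linarith), sub_add_cancel]

end H1

lemma Nfun_eq_zero_of_integral_norm_deriv_sq_eq_zero {f : ℝ → ℂ} (σ : ℝ)
    (hf' : MemLp (deriv f) 2 volume) (h : ∫ x, ‖deriv f x‖ ^ 2 = 0) : Nfun σ f = 0 := by
  have hsq : (fun x => ‖deriv f x‖ ^ 2) =ᵐ[volume] 0 :=
    (integral_eq_zero_iff_of_nonneg (fun x => by positivity)
      ((memLp_two_iff_integrable_sq_norm hf'.1).1 hf')).1 h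
  refine integral_eq_zero_of_ae ?_
  filter_upwards [hsq] with x hx
  simp_all

lemma norm_I_mul_add_sq (t : ℝ) (z w : ℂ) :
    ‖Complex.I * t * z + w‖ ^ 2 = t ^ 2 * ‖z‖ ^ 2 + ‖w‖ ^ 2 - 2 * t * (z * conj w).im := by
  simp only [Complex.sq_norm, Complex.normSq_apply]
  simp [Complex.mul_im, Complex.mul_re]
  ring

lemma im_mul_conj_I_mul_add (t : ℝ) (z w : ℂ) :
    (z * conj (Complex.I * t * z + w)).im = (z * conj w).im - t * ‖z‖ ^ 2 := by
  simp only [Complex.sq_norm, Complex.normSq_apply]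
  simp [Complex.mul_im, Complex.mul_re]
  ring

lemma im_mul_conj_mul_of_norm_eq_one {e : ℂ} (he : ‖e‖ = 1) (z w : ℂ) :
    (e * z * conj (e * w)).im = (z * conj w).im := by
  have h : e * conj e = 1 := by rw [Complex.mul_conj, Complex.normSq_eq_norm_sq, he]; simp
  rw [map_mul, show e * z * (conj e * conj w) = e * conj e * (z * conj w) by ring, h, one_mul]

section Gauge

variable {c : ℝ} {f : ℝ → ℂ}

lemma norm_exp_I_mul_ofReal (t : ℝ) : ‖Complex.exp (Complex.I * t)‖ = 1 := by
  simp [Complex.norm_exp]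

lemma gaugeT_gaugeT (a b : ℝ) (f : ℝ → ℂ) : gaugeT a (gaugeT b f) = gaugeT (a + b) f := by
  funext x
  simp only [gaugeT, ← mul_assoc, ← Complex.exp_add]
  push_cast
  ring_nf

lemma gaugeT_zero (f : ℝ → ℂ) : gaugeT 0 f = f := by
  funext x
  simp [gaugeT]

lemma gaugeT_ne_zero (hf : f ≠ 0) : gaugeT c f ≠ 0 := fun h =>
  hf (by rw [← gaugeT_zero f, ← neg_add_cancel c, ← gaugeT_gaugeT, h]; funext x; simp [gaugeT])

lemma norm_gaugeT (c : ℝ) (f : ℝ → ℂ) (x : ℝ) : ‖gaugeT c f x‖ = ‖f x‖ := by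
  rw [gaugeT, norm_mul, norm_exp_I_mul_ofReal, one_mul]

lemma hasDerivAt_gaugeT {x : ℝ} (hf : DifferentiableAt ℝ f x) :
    HasDerivAt (gaugeT c f) (Complex.exp (Complex.I * ((c / 2) * x : ℝ))
      * (Complex.I * (c / 2 : ℝ) * f x + deriv f x)) x := by
  have hphase : HasDerivAt (fun y : ℝ => Complex.I * ((c / 2 * y : ℝ) : ℂ))
      (Complex.I * (c / 2 : ℝ)) x :=
    (((hasDerivAt_id x).const_mul (c / 2)).ofReal_comp.const_mul Complex.I).congr_deriv
      (by simp)
  exact (hphase.cexp.mul hf.hasDerivAt).congr_deriv (by ring)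

lemma norm_deriv_gaugeT_sq {x : ℝ} (hf : DifferentiableAt ℝ f x) :
    ‖deriv (gaugeT c f) x‖ ^ 2
      = ‖deriv f x‖ ^ 2 - c * (f x * conj (deriv f x)).im + c ^ 2 / 4 * ‖f x‖ ^ 2 := by
  rw [(hasDerivAt_gaugeT hf).deriv, norm_mul, norm_exp_I_mul_ofReal, one_mul,
    norm_I_mul_add_sq]
  ring

lemma im_gaugeT_mul_conj_deriv {x : ℝ} (hf : DifferentiableAt ℝ f x) :
    (gaugeT c f x * conj (deriv (gaugeT c f) x)).im
      = (f x * conj (deriv f x)).im - c / 2 * ‖f x‖ ^ 2 := by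
  rw [(hasDerivAt_gaugeT hf).deriv, gaugeT,
    im_mul_conj_mul_of_norm_eq_one (norm_exp_I_mul_ofReal _), im_mul_conj_I_mul_add]

lemma H1_gaugeT (hf : H1 f) : H1 (gaugeT c f) := by
  have hd : Differentiable ℝ (gaugeT c f) := fun x => (hasDerivAt_gaugeT (hf.1 x)).differentiableAt
  refine ⟨hd, hf.2.1.of_le hd.continuous.aestronglyMeasurable
    (ae_of_all _ fun x => (norm_gaugeT c f x).le), ?_⟩
  refine ((hf.2.1.const_mul (Complex.I * (c / 2 : ℝ))).add hf.2.2).of_le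
    (aestronglyMeasurable_deriv _ _) (ae_of_all _ fun x => ?_)
  rw [(hasDerivAt_gaugeT (hf.1 x)).deriv, norm_mul, norm_exp_I_mul_ofReal, one_mul]
  rfl

lemma Lfun_gaugeT (hf : H1 f) : Lfun c (gaugeT c f) = ∫ x, ‖deriv f x‖ ^ 2 := by
  have hderiv : ∫ x, ‖deriv (gaugeT c f) x‖ ^ 2 = (∫ x, ‖deriv f x‖ ^ 2)
      - c * (∫ x, (f x * conj (deriv f x)).im) + c ^ 2 / 4 * ∫ x, ‖f x‖ ^ 2 := by
    have hD := hf.integrable_norm_deriv_sq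
    have hI := hf.integrable_im_mul_conj_deriv.const_mul c
    simp_rw [norm_deriv_gaugeT_sq (hf.1 _)]
    rw [integral_add, integral_sub hD hI, integral_const_mul, integral_const_mul]
    exacts [hD.sub hI, hf.integrable_norm_sq.const_mul _]
  have him : ∫ x, (gaugeT c f x * conj (deriv (gaugeT c f) x)).im
      = (∫ x, (f x * conj (deriv f x)).im) - c / 2 * ∫ x, ‖f x‖ ^ 2 := by
    simp_rw [im_gaugeT_mul_conj_deriv (hf.1 _)]
    rw [integral_sub hf.integrable_im_mul_conj_deriv (hf.integrable_norm_sq.const_mul _),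
      integral_const_mul]
  simp_rw [Lfun, hderiv, him, norm_gaugeT]
  ring

lemma Nfun_gaugeT (hf : H1 f) {σ : ℝ} (hσ : 0 ≤ σ) :
    Nfun σ (gaugeT c f) = Nfun σ f - c / 2 * ∫ x, ‖f x‖ ^ (2 * σ + 2) := by
  have hpoint : ∀ x, ‖gaugeT c f x‖ ^ (2 * σ) * (gaugeT c f x * conj (deriv (gaugeT c f) x)).im
      = ‖f x‖ ^ (2 * σ) * (f x * conj (deriv f x)).im - c / 2 * ‖f x‖ ^ (2 * σ + 2) := by
    intro x
    rw [norm_gaugeT, im_gaugeT_mul_conj_deriv (hf.1 x), Real.rpow_add' (norm_nonneg _)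
      (by positivity), Real.rpow_two]
    ring
  rw [Nfun, integral_congr_ae (ae_of_all _ hpoint),
    integral_sub (hf.integrable_norm_rpow_mul (by positivity) hf.integrable_im_mul_conj_deriv)
      ((hf.integrable_norm_rpow (by linarith)).const_mul _), integral_const_mul, Nfun]

end Gauge

noncomputable def dilate (a γ : ℝ) (f : ℝ → ℂ) : ℝ → ℂ :=
  fun x => a * f (γ * x)

lemma MeasureTheory.MemLp.comp_mul_left {E : Type*} [NormedAddCommGroup E] {g : ℝ → E}
    {p : ENNReal} (hg : MemLp g p volume) {γ : ℝ} (hγ : γ ≠ 0) :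
    MemLp (fun x => g (γ * x)) p volume := by
  have hmap : Measure.map (γ * ·) volume = ENNReal.ofReal |γ⁻¹| • volume :=
    Real.map_volume_mul_left hγ
  have hg' : MemLp g p (Measure.map (γ * ·) volume) := by
    rw [hmap]; exact hg.smul_measure ENNReal.ofReal_ne_top
  exact (memLp_map_measure_iff (hmap ▸ hg.1.smul_measure _)
    (measurable_const_mul γ).aemeasurable).1 hg'

section Dilate

variable {a γ : ℝ} {f : ℝ → ℂ}

lemma deriv_dilate (a γ : ℝ) (f : ℝ → ℂ) (x : ℝ) :
    deriv (dilate a γ f) x = ((a * γ : ℝ) : ℂ) * deriv f (γ * x) := by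
  unfold dilate
  rw [deriv_const_mul_field']
  dsimp only
  rw [deriv_comp_mul_left, Complex.real_smul]
  push_cast
  ring

lemma dilate_ne_zero (ha : a ≠ 0) (hγ : γ ≠ 0) (hf : f ≠ 0) : dilate a γ f ≠ 0 := by
  obtain ⟨x, hx⟩ := Function.ne_iff.1 hf
  refine Function.ne_iff.2 ⟨x / γ, ?_⟩
  simpa [dilate, mul_div_cancel₀ x hγ, ha] using hx

lemma H1_dilate (hf : H1 f) (hγ : γ ≠ 0) : H1 (dilate a γ f) := by
  refine ⟨fun x => ((hf.1 (γ * x)).comp x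
    ((differentiableAt_id.const_mul γ))).const_mul _, (hf.2.1.comp_mul_left hγ).const_mul _, ?_⟩
  rw [funext (deriv_dilate a γ f)]
  exact (hf.2.2.comp_mul_left hγ).const_mul _

lemma integral_comp_mul_left_of_pos {g : ℝ → ℝ} (hγ : 0 < γ) :
    ∫ x, g (γ * x) = γ⁻¹ * ∫ x, g x := by
  rw [Measure.integral_comp_mul_left, abs_of_pos (inv_pos.2 hγ), smul_eq_mul]

lemma integral_norm_deriv_dilate_sq (hγ : 0 < γ) :
    ∫ x, ‖deriv (dilate a γ f) x‖ ^ 2 = a ^ 2 * γ * ∫ x, ‖deriv f x‖ ^ 2 := by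
  simp_rw [deriv_dilate, norm_mul, Complex.norm_real, Real.norm_eq_abs, mul_pow, sq_abs]
  rw [integral_const_mul, integral_comp_mul_left_of_pos (g := fun y => ‖deriv f y‖ ^ 2) hγ]
  field_simp

lemma integral_norm_dilate_rpow (ha : 0 ≤ a) (hγ : 0 < γ) (p : ℝ) :
    ∫ x, ‖dilate a γ f x‖ ^ p = a ^ p / γ * ∫ x, ‖f x‖ ^ p := by
  simp_rw [dilate, norm_mul, Complex.norm_real, Real.norm_of_nonneg ha,
    Real.mul_rpow ha (norm_nonneg _)]
  rw [integral_const_mul, integral_comp_mul_left_of_pos (g := fun y => ‖f y‖ ^ p) hγ]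
  ring

lemma Nfun_dilate (ha : 0 ≤ a) (hγ : 0 < γ) (σ : ℝ) :
    Nfun σ (dilate a γ f) = a ^ (2 * σ) * a ^ 2 * Nfun σ f := by
  have hpoint : ∀ x,
      ‖dilate a γ f x‖ ^ (2 * σ) * (dilate a γ f x * conj (deriv (dilate a γ f) x)).im
      = a ^ (2 * σ) * a ^ 2 * γ * (‖f (γ * x)‖ ^ (2 * σ)
        * (f (γ * x) * conj (deriv f (γ * x))).im) := by
    intro x
    simp only [deriv_dilate, dilate, norm_mul, Complex.norm_real, Real.norm_of_nonneg ha,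
      Real.mul_rpow ha (norm_nonneg _), map_mul, Complex.conj_ofReal]
    rw [show (a : ℂ) * f (γ * x) * ((a * γ : ℝ) * conj (deriv f (γ * x)))
      = ((a ^ 2 * γ : ℝ) : ℂ) * (f (γ * x) * conj (deriv f (γ * x))) by push_cast; ring,
      Complex.im_ofReal_mul]
    ring
  rw [Nfun, integral_congr_ae (ae_of_all _ hpoint), integral_const_mul,
    integral_comp_mul_left_of_pos
      (g := fun y => ‖f y‖ ^ (2 * σ) * (f y * conj (deriv f y)).im) hγ, Nfun]
  field_simp

end Dilate

lemma Nfun_gaugeT_dilate_rpow {σ c γ : ℝ} {f : ℝ → ℂ} (hσ : 0 < σ) (hf : H1 f) (hγ : 0 < γ) :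
    Nfun σ (gaugeT c (dilate (γ ^ (1 / σ)) γ f))
      = (γ ^ (1 / σ)) ^ 2 * γ * (γ * Nfun σ f - c / 2 * ∫ x, ‖f x‖ ^ (2 * σ + 2)) := by
  have ha : 0 ≤ γ ^ (1 / σ) := by positivity
  have hpow : (γ ^ (1 / σ)) ^ (2 * σ) = γ ^ 2 := by
    rw [← Real.rpow_mul hγ.le, one_div_mul_eq_div, mul_div_cancel_right₀ _ hσ.ne', Real.rpow_two]
  rw [Nfun_gaugeT (H1_dilate hf hγ.ne') (by positivity), Nfun_dilate ha hγ,
    integral_norm_dilate_rpow ha hγ, Real.rpow_add' ha (by positivity), Real.rpow_two, hpow]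
  field_simp

lemma Lfun_nonneg {c : ℝ} {u : ℝ → ℂ} (hu : H1 u) : 0 ≤ Lfun c u :=
  calc 0 ≤ ∫ x, ‖deriv (gaugeT (-c) u) x‖ ^ 2 := integral_nonneg fun x => by positivity
    _ = Lfun c (gaugeT c (gaugeT (-c) u)) := (Lfun_gaugeT (H1_gaugeT hu)).symm
    _ = Lfun c u := by rw [gaugeT_gaugeT, add_neg_cancel, gaugeT_zero]

lemma Sfun_nonneg_of_Kfun_eq_zero {σ c : ℝ} {u : ℝ → ℂ} (hσ : 0 ≤ σ) (hu : H1 u)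
    (hK : Kfun σ c u = 0) : 0 ≤ Sfun σ c u := by
  have hN : Nfun σ u = Lfun c u := by rw [Kfun] at hK; linarith
  have hL := Lfun_nonneg (c := c) hu
  rw [Sfun, hN, show Lfun c u - Lfun c u / (σ + 1) = σ / (σ + 1) * Lfun c u by field_simp; ring]
  positivity

lemma dmin_le {σ c : ℝ} {u : ℝ → ℂ} (hσ : 0 ≤ σ) (hu : H1 u) (hu0 : u ≠ 0)
    (hK : Kfun σ c u = 0) : dmin σ c ≤ Sfun σ c u :=
  csInf_le ⟨0, by rintro _ ⟨v, hv, -, hKv, rfl⟩; exact Sfun_nonneg_of_Kfun_eq_zero hσ hv hKv⟩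
    ⟨u, hu, hu0, hK, rfl⟩

lemma exists_Kfun_eq_zero_of_Kfun_gaugeT_neg {σ c : ℝ} {f : ℝ → ℂ} (hσ : 0 < σ) (hc : 0 ≤ c)
    (hf : H1 f) (hf0 : f ≠ 0) (hneg : Kfun σ c (gaugeT c f) < 0) :
    ∃ u, H1 u ∧ u ≠ 0 ∧ Kfun σ c u = 0 ∧ (σ + 1) / σ * Sfun σ c u < ∫ x, ‖deriv f x‖ ^ 2 := by
  set D := ∫ x, ‖deriv f x‖ ^ 2
  set Q := ∫ x, ‖f x‖ ^ (2 * σ + 2) with hQ_def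
  set P := Nfun σ f
  rw [Kfun, Lfun_gaugeT hf, Nfun_gaugeT hf hσ.le] at hneg
  have hD0 : 0 ≤ D := integral_nonneg fun x => by positivity
  have hQ0 : 0 ≤ Q := integral_nonneg fun x => by positivity
  have hcQ : 0 ≤ c / 2 * Q := by positivity
  have hP : D + c / 2 * Q < P := by linarith
  have hD : 0 < D := hD0.lt_of_ne fun h => by
    have := Nfun_eq_zero_of_integral_norm_deriv_sq_eq_zero σ hf.2.2 h.symm
    linarith
  set γ := (D + c / 2 * Q) / P
  have hγP : γ * P = D + c / 2 * Q := div_mul_cancel₀ _ (by linarith)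
  have hγ0 : 0 < γ := div_pos (by linarith) (by linarith)
  have hγ1 : γ < 1 := (div_lt_one (by linarith)).2 hP
  have ha1 : γ ^ (1 / σ) < 1 := Real.rpow_lt_one hγ0.le hγ1 (by positivity)
  have hdil := H1_dilate (a := γ ^ (1 / σ)) hf hγ0.ne'
  have hL : Lfun c (gaugeT c (dilate (γ ^ (1 / σ)) γ f)) = (γ ^ (1 / σ)) ^ 2 * γ * D := by
    rw [Lfun_gaugeT hdil, integral_norm_deriv_dilate_sq hγ0]
  have hN : Nfun σ (gaugeT c (dilate (γ ^ (1 / σ)) γ f)) = (γ ^ (1 / σ)) ^ 2 * γ * D := by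
    rw [Nfun_gaugeT_dilate_rpow hσ hf hγ0, ← hQ_def, hγP, add_sub_cancel_right]
  refine ⟨gaugeT c (dilate (γ ^ (1 / σ)) γ f), H1_gaugeT hdil,
    gaugeT_ne_zero (dilate_ne_zero (by positivity) hγ0.ne' hf0), by rw [Kfun, hL, hN, sub_self], ?_⟩
  rw [Sfun, hL, hN, show ∀ L : ℝ, (σ + 1) / σ * (L - L / (σ + 1)) = L by intro L; field_simp; ring]
  exact mul_lt_of_lt_one_left hD (mul_lt_one_of_nonneg_of_lt_one_left (by positivity)
    (pow_lt_one₀ (by positivity) ha1 two_ne_zero) hγ1.le)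

theorem K_nonneg_of_small_gradient_general (σ c : ℝ) (hσ : 0 < σ) (hc : 0 < c)
    (f : ℝ → ℂ) (hf : H1 f) (hf0 : f ≠ 0)
    (hgrad : (∫ x : ℝ, ‖deriv f x‖ ^ 2) ≤ ((σ + 1) / σ) * dmin σ c) :
    0 ≤ Kfun σ c (gaugeT c f) := by
  by_contra! hneg
  obtain ⟨u, hu, hu0, hK, hS⟩ := exists_Kfun_eq_zero_of_Kfun_gaugeT_neg hσ hc.le hf hf0 hneg
  have hdmin : (σ + 1) / σ * dmin σ c ≤ (σ + 1) / σ * Sfun σ c u := by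
    gcongr
    exact dmin_le hσ.le hu hu0 hK
  linarith

theorem K_nonneg_of_small_gradient (σ c : ℝ) (hσ : 0 < σ) (hσ1 : σ < 1) (hc : 0 < c)
    (f : ℝ → ℂ) (hf : H1 f) (hf0 : f ≠ 0)
    (hgrad : (∫ x : ℝ, ‖deriv f x‖ ^ 2) ≤ ((σ + 1) / σ) * dmin σ c) :
    0 ≤ Kfun σ c (gaugeT c f) :=
  K_nonneg_of_small_gradient_general σ c hσ hc f hf hf0 hgrad
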